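/- (Structure theorem, existence.) Let (X, F, 𝔅, ν) be a Renyi space. Then there exists a σ-finite measure μ on (X, F) such that every B ∈ 𝔅 satisfies 0 < μ(B) < ∞ and ν(A | B) = μ(A ∩ B)/μ(B) for all A ∈ F and all B ∈ 𝔅. Hence every Renyi space is generated by a conditional measure space. -/

import Mathlib

open MeasureTheory
open scoped ENNReal

/-- A Renyi (conditional probability) space on a measurable space `X`: a bunch
`𝔅` of measurable sets together with probability measures `cond B = ν(· | B)`
for `B ∈ 𝔅`, satisfying the Renyi axioms. -/
structure RenyiSpace (X : Type*) [MeasurableSpace X] where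
  bunch : Set (Set X)
  cond : Set X → Measure X
  bunch_measurableSet : ∀ B ∈ bunch, MeasurableSet B
  bunch_union : ∀ B₁ ∈ bunch, ∀ B₂ ∈ bunch, B₁ ∪ B₂ ∈ bunch
  bunch_cover : ∃ B : ℕ → Set X, (∀ i, B i ∈ bunch) ∧ (⋃ i, B i) = Set.univ
  empty_not_mem : ∅ ∉ bunch
  isProbabilityMeasure : ∀ B ∈ bunch, IsProbabilityMeasure (cond B)
  pos : ∀ B₁ ∈ bunch, ∀ B₂ ∈ bunch, B₁ ⊆ B₂ → 0 < cond B₂ B₁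
  renyi : ∀ B₁ ∈ bunch, ∀ B₂ ∈ bunch, B₁ ⊆ B₂ →
    ∀ A : Set X, MeasurableSet A →
      cond B₁ A = cond B₂ (A ∩ B₁) / cond B₂ B₁

/-! Fix `B₀` in the bunch. A generating measure must satisfy `μ B / μ B₀ = ν(B | E) / ν(B₀ | E)`
for every `E ⊇ B ∪ B₀` in the bunch, and by the Renyi axiom this ratio does not depend on `E`.
Hence the measures `(μ B / μ B₀) • ν(· | B)` are consistent under restriction, and gluing them
along a disjointed countable cover of `X` yields `μ`. -/

open Set

theorem MeasureTheory.exists_measure_restrict_eq {X : Type*} [MeasurableSpace X]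
    {𝒮 : Set (Set X)} (m : Set X → Measure X) (h𝒮 : ∀ B ∈ 𝒮, MeasurableSet B)
    (union_mem : ∀ B ∈ 𝒮, ∀ E ∈ 𝒮, B ∪ E ∈ 𝒮)
    (cover : ∃ G : ℕ → Set X, (∀ n, G n ∈ 𝒮) ∧ ⋃ n, G n = univ)
    (restrict_eq : ∀ B ∈ 𝒮, ∀ E ∈ 𝒮, B ⊆ E → (m E).restrict B = m B) :
    ∃ μ : Measure X, ∀ B ∈ 𝒮, μ.restrict B = m B := by
  obtain ⟨G, hG, hGcover⟩ := cover
  set D := disjointed G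
  have hD : ∀ n, MeasurableSet (D n) := MeasurableSet.disjointed fun n => h𝒮 _ (hG n)
  refine ⟨Measure.sum fun n => (m (G n)).restrict (D n), fun B hB => ?_⟩
  have hBG : ∀ n, B ∪ G n ∈ 𝒮 := fun n => union_mem B hB _ (hG n)
  have piece : ∀ n, ((m (G n)).restrict (D n)).restrict B = (m B).restrict (D n) := fun n =>
    calc ((m (G n)).restrict (D n)).restrict B
        = ((m (B ∪ G n)).restrict (G n)).restrict (B ∩ D n) := by
          rw [Measure.restrict_restrict (h𝒮 B hB),
            restrict_eq _ (hG n) _ (hBG n) subset_union_right]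
      _ = ((m (B ∪ G n)).restrict B).restrict (D n) := by
          rw [Measure.restrict_restrict_of_subset
              (inter_subset_right.trans (disjointed_subset G n)),
            Measure.restrict_restrict (hD n), inter_comm]
      _ = (m B).restrict (D n) := by rw [restrict_eq _ hB _ (hBG n) subset_union_left]
  rw [Measure.restrict_sum _ (h𝒮 B hB), funext piece,
    ← Measure.restrict_iUnion (disjoint_disjointed G) hD, iUnion_disjointed, hGcover,
    Measure.restrict_univ]

namespace RenyiSpace

variable {X : Type*} [MeasurableSpace X] (R : RenyiSpace X)

lemma cond_univ {B : Set X} (hB : B ∈ R.bunch) : R.cond B univ = 1 :=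
  (R.isProbabilityMeasure B hB).measure_univ

lemma cond_ne_top {B : Set X} (hB : B ∈ R.bunch) (A : Set X) : R.cond B A ≠ ⊤ :=
  ne_top_of_le_ne_top (R.cond_univ hB ▸ ENNReal.one_ne_top) (measure_mono (subset_univ A))

lemma cond_inter_of_subset {B₁ B₂ : Set X} (h₁ : B₁ ∈ R.bunch) (h₂ : B₂ ∈ R.bunch)
    (hsub : B₁ ⊆ B₂) {A : Set X} (hA : MeasurableSet A) :
    R.cond B₂ (A ∩ B₁) = R.cond B₂ B₁ * R.cond B₁ A := by
  rw [R.renyi B₁ h₁ B₂ h₂ hsub A hA,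
    ENNReal.mul_div_cancel (R.pos B₁ h₁ B₂ h₂ hsub).ne' (R.cond_ne_top h₂ B₁)]

lemma cond_of_subset {B₁ B₂ A : Set X} (h₁ : B₁ ∈ R.bunch) (h₂ : B₂ ∈ R.bunch)
    (hsub : B₁ ⊆ B₂) (hA : MeasurableSet A) (hAB : A ⊆ B₁) :
    R.cond B₂ A = R.cond B₂ B₁ * R.cond B₁ A := by
  rw [← R.cond_inter_of_subset h₁ h₂ hsub hA, inter_eq_left.mpr hAB]

lemma cond_div_cond_of_subset {E E' F G : Set X} (hE : E ∈ R.bunch) (hE' : E' ∈ R.bunch)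
    (hEE' : E ⊆ E') (hF : MeasurableSet F) (hG : MeasurableSet G) (hFE : F ⊆ E)
    (hGE : G ⊆ E) : R.cond E' F / R.cond E' G = R.cond E F / R.cond E G := by
  rw [R.cond_of_subset hE hE' hEE' hF hFE, R.cond_of_subset hE hE' hEE' hG hGE,
    ENNReal.mul_div_mul_left _ _ (R.pos E hE E' hE' hEE').ne' (R.cond_ne_top hE' E)]

/-- The ratio `μ B / μ B₀` forced on any generating measure `μ`. -/
noncomputable def weight (B₀ B : Set X) : ℝ≥0∞ :=
  R.cond (B ∪ B₀) B / R.cond (B ∪ B₀) B₀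

/-- The restriction `μ.restrict B` forced on a generating measure normalised by `μ B₀ = 1`. -/
noncomputable def scaledCond (B₀ B : Set X) : Measure X :=
  R.weight B₀ B • R.cond B

variable {R}

lemma weight_eq_cond_div_cond {B₀ B E : Set X} (h₀ : B₀ ∈ R.bunch) (hB : B ∈ R.bunch)
    (hE : E ∈ R.bunch) (hBE : B ⊆ E) (h₀E : B₀ ⊆ E) :
    R.weight B₀ B = R.cond E B / R.cond E B₀ :=
  (R.cond_div_cond_of_subset (R.bunch_union B hB B₀ h₀) hE (union_subset hBE h₀E)
    (R.bunch_measurableSet B hB) (R.bunch_measurableSet B₀ h₀)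
    subset_union_left subset_union_right).symm

lemma weight_pos {B₀ B : Set X} (h₀ : B₀ ∈ R.bunch) (hB : B ∈ R.bunch) :
    0 < R.weight B₀ B :=
  ENNReal.div_pos (R.pos B hB _ (R.bunch_union B hB B₀ h₀) subset_union_left).ne'
    (R.cond_ne_top (R.bunch_union B hB B₀ h₀) B₀)

lemma weight_lt_top {B₀ B : Set X} (h₀ : B₀ ∈ R.bunch) (hB : B ∈ R.bunch) :
    R.weight B₀ B < ⊤ :=
  ENNReal.div_lt_top (R.cond_ne_top (R.bunch_union B hB B₀ h₀) B)
    (R.pos B₀ h₀ _ (R.bunch_union B hB B₀ h₀) subset_union_right).ne'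

lemma weight_mul_cond {B₀ B B' : Set X} (h₀ : B₀ ∈ R.bunch) (hB : B ∈ R.bunch)
    (hB' : B' ∈ R.bunch) (hBB' : B ⊆ B') :
    R.weight B₀ B' * R.cond B' B = R.weight B₀ B := by
  have hE := R.bunch_union B' hB' B₀ h₀
  rw [weight, weight_eq_cond_div_cond h₀ hB hE (hBB'.trans subset_union_left) subset_union_right,
    R.cond_of_subset hB' hE subset_union_left (R.bunch_measurableSet B hB) hBB',
    ENNReal.mul_div_right_comm]

lemma scaledCond_restrict {B₀ B B' : Set X} (h₀ : B₀ ∈ R.bunch) (hB : B ∈ R.bunch)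
    (hB' : B' ∈ R.bunch) (hBB' : B ⊆ B') :
    (R.scaledCond B₀ B').restrict B = R.scaledCond B₀ B := by
  ext A hA
  rw [Measure.restrict_apply hA, scaledCond, scaledCond, Measure.smul_apply,
    Measure.smul_apply, smul_eq_mul, smul_eq_mul, R.cond_inter_of_subset hB hB' hBB' hA,
    ← mul_assoc, weight_mul_cond h₀ hB hB' hBB']

end RenyiSpace

/-- Structure theorem, existence: every Renyi space is generated
by a σ-finite measure: there is a σ-finite `μ` such that each `B ∈ 𝔅` is
admissible for `μ` and `ν(A | B) = μ (A ∩ B) / μ B` for all measurable `A`. -/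
theorem stmt_12 {X : Type*} [MeasurableSpace X] (R : RenyiSpace X) :
    ∃ μ : Measure X, SigmaFinite μ ∧
      ∀ B ∈ R.bunch, (0 < μ B ∧ μ B < ⊤) ∧
        ∀ A : Set X, MeasurableSet A → R.cond B A = μ (A ∩ B) / μ B := by
  obtain ⟨G, hG, hGcover⟩ := R.bunch_cover
  obtain ⟨μ, hμ⟩ := exists_measure_restrict_eq (R.scaledCond (G 0)) R.bunch_measurableSet
    R.bunch_union ⟨G, hG, hGcover⟩ fun B hB E hE => RenyiSpace.scaledCond_restrict (hG 0) hB hE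
  have hμ_inter : ∀ B ∈ R.bunch, ∀ A, MeasurableSet A →
      μ (A ∩ B) = R.weight (G 0) B * R.cond B A := fun B hB A hA => by
    rw [← Measure.restrict_apply hA, hμ B hB]
    rfl
  have hμ_eq : ∀ B ∈ R.bunch, μ B = R.weight (G 0) B := fun B hB => by
    simpa [R.cond_univ hB] using hμ_inter B hB univ MeasurableSet.univ
  refine ⟨μ, ⟨⟨⟨G, fun _ => trivial, fun n => ?_, hGcover⟩⟩⟩, fun B hB => ⟨?_, fun A hA => ?_⟩⟩
  · exact hμ_eq _ (hG n) ▸ RenyiSpace.weight_lt_top (hG 0) (hG n)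
  · exact hμ_eq B hB ▸ ⟨RenyiSpace.weight_pos (hG 0) hB, RenyiSpace.weight_lt_top (hG 0) hB⟩
  · rw [hμ_inter B hB A hA, hμ_eq B hB, mul_comm, ENNReal.mul_div_cancel_right
      (RenyiSpace.weight_pos (hG 0) hB).ne' (RenyiSpace.weight_lt_top (hG 0) hB).ne]
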